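/- arXiv:math/0606162 — 3 statements merged into one kernel-verified Lean document; each statement's English description precedes it below -/
import Mathlib

section
/- Let $l_1,l_2,l_3 : \mathbb{R} \to (0,\infty)$ be functions with $l_i(t) \to \infty$ and $l_3(t) - l_1(t) - l_2(t) \to \infty$ as $t \to \infty$. Let $l_{12}(t) = \operatorname{arccosh}\left(\frac{\cosh(l_3/2) + \cosh(l_1/2)\cosh(l_2/2)}{\sinh(l_1/2)\sinh(l_2/2)}\right)$. Then $l_{12}(t) - \big((l_3(t)-l_1(t)-l_2(t))/2 + \ln 4\big) \to 0$ as $t \to \infty$. -/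
open Filter

noncomputable def arcosh (x : ℝ) : ℝ := Real.log (x + Real.sqrt (x ^ 2 - 1))

noncomputable def pantsPerp (l1 l2 l3 : ℝ) : ℝ :=
  arcosh ((Real.cosh (l3 / 2) + Real.cosh (l1 / 2) * Real.cosh (l2 / 2)) /
    (Real.sinh (l1 / 2) * Real.sinh (l2 / 2)))

/-!
Write `a, b, c` for the half-lengths and `x = cosh l12` for the argument of `arcosh` in `pantsPerp`.
Splitting the fraction gives
`x * e^(a+b-c) = (cosh c e^(-c)) (e^a / sinh a) (e^b / sinh b) + coth a coth b e^(-(c-a-b))`,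
which tends to `(1/2) * 2 * 2 + 0 = 2`. Hence `x → ∞`, and since `arcosh x = log (2x) + o(1)`,
`arcosh x - (c - a - b) = log (2 x e^(a+b-c)) + o(1) → log 4`.
-/

open Topology
open Real (cosh sinh exp log sqrt)

lemma tendsto_cosh_mul_exp_neg_atTop :
    Tendsto (fun x => cosh x * exp (-x)) atTop (𝓝 (1 / 2)) := by
  have hlim : Tendsto (fun x : ℝ => (1 + exp (-x) ^ 2) / 2) atTop (𝓝 ((1 + 0 ^ 2) / 2)) :=
    (tendsto_const_nhds.add (Real.tendsto_exp_neg_atTop_nhds_zero.pow 2)).div_const 2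
  rw [show ((1 : ℝ) + 0 ^ 2) / 2 = 1 / 2 by norm_num] at hlim
  refine hlim.congr fun x => ?_
  rw [Real.cosh_eq, div_mul_eq_mul_div, add_mul, ← Real.exp_add, ← Real.exp_add, sq,
    ← Real.exp_add]
  simp

lemma tendsto_sinh_mul_exp_neg_atTop :
    Tendsto (fun x => sinh x * exp (-x)) atTop (𝓝 (1 / 2)) := by
  have hlim : Tendsto (fun x : ℝ => (1 - exp (-x) ^ 2) / 2) atTop (𝓝 ((1 - 0 ^ 2) / 2)) :=
    (tendsto_const_nhds.sub (Real.tendsto_exp_neg_atTop_nhds_zero.pow 2)).div_const 2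
  rw [show ((1 : ℝ) - 0 ^ 2) / 2 = 1 / 2 by norm_num] at hlim
  refine hlim.congr fun x => ?_
  rw [Real.sinh_eq, div_mul_eq_mul_div, sub_mul, ← Real.exp_add, ← Real.exp_add, sq,
    ← Real.exp_add]
  simp

lemma tendsto_exp_div_sinh_atTop : Tendsto (fun x => exp x / sinh x) atTop (𝓝 2) := by
  have hlim := tendsto_sinh_mul_exp_neg_atTop.inv₀ (by norm_num)
  rw [show (1 / 2 : ℝ)⁻¹ = 2 by norm_num] at hlim
  refine hlim.congr fun x => ?_
  rw [mul_inv, Real.exp_neg, inv_inv, div_eq_mul_inv, mul_comm]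

lemma tendsto_cosh_div_sinh_atTop : Tendsto (fun x => cosh x / sinh x) atTop (𝓝 1) := by
  have h := tendsto_cosh_mul_exp_neg_atTop.mul tendsto_exp_div_sinh_atTop
  rw [show (1 / 2 * 2 : ℝ) = 1 by norm_num] at h
  refine h.congr fun x => ?_
  rw [Real.exp_neg]
  field_simp

lemma tendsto_arcosh_sub_log_two_mul_atTop :
    Tendsto (fun x => arcosh x - log (2 * x)) atTop (𝓝 0) := by
  have hlim : Tendsto (fun x : ℝ => (1 + sqrt (1 - x⁻¹ ^ 2)) / 2) atTop
      (𝓝 ((1 + sqrt (1 - 0 ^ 2)) / 2)) :=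
    (tendsto_const_nhds.add
      (tendsto_const_nhds.sub (tendsto_inv_atTop_zero.pow 2)).sqrt).div_const 2
  rw [show (1 + sqrt (1 - 0 ^ 2)) / 2 = 1 by norm_num] at hlim
  have hlog := (Real.continuousAt_log one_ne_zero).tendsto.comp hlim
  rw [Real.log_one] at hlog
  refine hlog.congr' ?_
  filter_upwards [eventually_gt_atTop 0] with x hx
  have hsqrt : sqrt (x ^ 2 - 1) = x * sqrt (1 - x⁻¹ ^ 2) := by
    rw [show x ^ 2 - 1 = x ^ 2 * (1 - x⁻¹ ^ 2) by field_simp, Real.sqrt_mul (sq_nonneg x),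
      Real.sqrt_sq hx.le]
  have hnum : 0 < 1 + sqrt (1 - x⁻¹ ^ 2) := by positivity
  rw [Function.comp_apply, arcosh, hsqrt, ← Real.log_div (by positivity) (by positivity)]
  congr 1
  field_simp

lemma tendsto_arcosh_sub_of_tendsto_mul_exp_neg {α : Type*} {l : Filter α} {x d : α → ℝ}
    {y : ℝ} (hy : 0 < y) (hd : Tendsto d l atTop)
    (hxd : Tendsto (fun t => x t * exp (-d t)) l (𝓝 y)) :
    Tendsto (fun t => arcosh (x t) - d t) l (𝓝 (log (2 * y))) := by
  have hx : Tendsto x l atTop :=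
    (hxd.pos_mul_atTop hy (Real.tendsto_exp_atTop.comp hd)).congr fun t => by
      simp [mul_assoc, ← Real.exp_add]
  have hlog := (Real.continuousAt_log (by positivity : 2 * y ≠ 0)).tendsto.comp (hxd.const_mul 2)
  have h := (tendsto_arcosh_sub_log_two_mul_atTop.comp hx).add hlog
  rw [zero_add] at h
  refine h.congr' ?_
  filter_upwards [hx.eventually_gt_atTop 0] with t ht
  simp only [Function.comp_apply]
  rw [← mul_assoc, Real.log_mul (by positivity) (Real.exp_ne_zero _), Real.log_exp]
  ring

lemma tendsto_hexagon_cosh_mul_exp_neg {α : Type*} {l : Filter α} {a b c : α → ℝ}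
    (ha : Tendsto a l atTop) (hb : Tendsto b l atTop)
    (hcab : Tendsto (fun t => c t - a t - b t) l atTop) :
    Tendsto (fun t => (cosh (c t) + cosh (a t) * cosh (b t)) / (sinh (a t) * sinh (b t)) *
      exp (-(c t - a t - b t))) l (𝓝 2) := by
  have hc : Tendsto c l atTop :=
    ((hcab.atTop_add_atTop ha).atTop_add_atTop hb).congr fun t => by ring
  have hlim : Tendsto (fun t => cosh (c t) * exp (-c t) * (exp (a t) / sinh (a t)) *
      (exp (b t) / sinh (b t)) + cosh (a t) / sinh (a t) * (cosh (b t) / sinh (b t)) *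
      exp (-(c t - a t - b t))) l (𝓝 (1 / 2 * 2 * 2 + 1 * 1 * 0)) :=
    ((tendsto_cosh_mul_exp_neg_atTop.comp hc).mul (tendsto_exp_div_sinh_atTop.comp ha)
      |>.mul (tendsto_exp_div_sinh_atTop.comp hb)).add
    (((tendsto_cosh_div_sinh_atTop.comp ha).mul (tendsto_cosh_div_sinh_atTop.comp hb)).mul
      (Real.tendsto_exp_neg_atTop_nhds_zero.comp hcab))
  rw [show (1 / 2 * 2 * 2 + 1 * 1 * 0 : ℝ) = 2 by norm_num] at hlim
  refine hlim.congr fun t => ?_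
  rw [show -(c t - a t - b t) = -c t + a t + b t by ring, Real.exp_add, Real.exp_add]
  ring

theorem pantsPerp_asymptotic_long_leg_general (l1 l2 l3 : ℝ → ℝ)
    (h1 : Tendsto l1 atTop atTop) (h2 : Tendsto l2 atTop atTop)
    (hdiff : Tendsto (fun t => l3 t - l1 t - l2 t) atTop atTop) :
    Tendsto (fun t => pantsPerp (l1 t) (l2 t) (l3 t) -
      ((l3 t - l1 t - l2 t) / 2 + Real.log 4)) atTop (nhds 0) := by
  have hcab : Tendsto (fun t => l3 t / 2 - l1 t / 2 - l2 t / 2) atTop atTop := by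
    simpa only [sub_div] using hdiff.atTop_div_const two_pos
  have h := tendsto_arcosh_sub_of_tendsto_mul_exp_neg two_pos hcab
    (tendsto_hexagon_cosh_mul_exp_neg (h1.atTop_div_const two_pos) (h2.atTop_div_const two_pos)
      hcab)
  rw [← tendsto_sub_nhds_zero_iff] at h
  refine h.congr fun t => ?_
  rw [pantsPerp, show (2 : ℝ) * 2 = 4 by norm_num]
  ring

/-- If `l1, l2, l3 → ∞` and `l3 - l1 - l2 → ∞` then the perpendicular length
`l12` between the boundary components of lengths `l1` and `l2` satisfies
`l12 - ((l3 - l1 - l2)/2 + log 4) → 0`. -/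
theorem pantsPerp_asymptotic_long_leg (l1 l2 l3 : ℝ → ℝ)
    (hpos : ∀ t, 0 < l1 t ∧ 0 < l2 t ∧ 0 < l3 t)
    (h1 : Tendsto l1 atTop atTop) (h2 : Tendsto l2 atTop atTop)
    (h3 : Tendsto l3 atTop atTop)
    (hdiff : Tendsto (fun t => l3 t - l1 t - l2 t) atTop atTop) :
    Tendsto (fun t => pantsPerp (l1 t) (l2 t) (l3 t) -
      ((l3 t - l1 t - l2 t) / 2 + Real.log 4)) atTop (nhds 0) :=
  pantsPerp_asymptotic_long_leg_general l1 l2 l3 h1 h2 hdiff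
end

section
/- Let $l_1, l_2, l_3 > 0$ and let $l_{13}$ satisfy $\cosh(l_{13}) = \frac{\cosh(l_2/2)}{\sinh(l_1/2)\sinh(l_3/2)} + \coth(l_1/2)\coth(l_3/2)$, and let $l_\alpha$ satisfy $\cosh(l_\alpha/2) = \sinh(l_1/2)\sinh(l_{13})$. Then $\cosh^2(l_\alpha/2) \ge 1 + 2\,\frac{\sinh(l_1/2)\cosh(l_2/2)\coth(l_1/2)\coth(l_3/2)}{\sinh(l_3/2)}$. Consequently, if along a sequence $l_\alpha \to 0$ and $l_1, l_2, l_3 \to \infty$, then $l_3 - l_1 - l_2 \to \infty$. -/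
open Filter Topology Real

/-!
Writing `sᵢ = sinh (lᵢ/2)`, `cᵢ = cosh (lᵢ/2)`, the hypotheses give
`cosh² (lα/2) - 1 = s₁² (cosh² l₁₃ - 1)`, and expanding `cosh l₁₃` and using `cᵢ² = 1 + sᵢ²`
shows that this exceeds `2 c₁ c₂ c₃ / s₃²` (the bound, with `s₁` cancelled) by `(c₁² + c₂²) / s₃²`.
Since `cᵢ ≥ e^{lᵢ/2}/2` and `s₃ ≤ min (c₃, e^{l₃/2}/2)`, the bound dominates `e^{(l₁+l₂-l₃)/2}`;
so `sinh² (lα/2) ≥ e^{-(l₃-l₁-l₂)/2}`, and `lα → 0` forces `l₃ - l₁ - l₂ → ∞`.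
-/

lemma tendsto_atTop_of_exp_neg_le {α : Type*} {l : Filter α} {f g : α → ℝ}
    (hg : Tendsto g l (𝓝 0)) (hfg : ∀ᶠ t in l, exp (-f t) ≤ g t) : Tendsto f l atTop := by
  have hg' : Tendsto g l (𝓝[>] 0) :=
    tendsto_nhdsWithin_of_tendsto_nhds_of_eventually_within _ hg
      (hfg.mono fun t ht => (exp_pos _).trans_le ht)
  refine tendsto_atTop_mono' l ?_ (tendsto_neg_atBot_atTop.comp (tendsto_log_nhdsGT_zero.comp hg'))
  filter_upwards [hfg] with t ht
  have := log_le_log (exp_pos _) ht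
  rw [log_exp] at this
  exact neg_le.mp this

section Hyperbolic

variable {x z : ℝ} (y : ℝ)

lemma sinh_sq_mul_sq_sub_one_eq (hx : sinh x ≠ 0) (hz : sinh z ≠ 0) :
    sinh x ^ 2 * ((cosh y / (sinh x * sinh z) + cosh x / sinh x * (cosh z / sinh z)) ^ 2 - 1) =
      1 + 2 * sinh x * cosh y * (cosh x / sinh x) * (cosh z / sinh z) / sinh z +
        (cosh y ^ 2 + cosh x ^ 2) / sinh z ^ 2 := by
  field_simp
  linear_combination cosh x ^ 2 * cosh_sq' z + sinh z ^ 2 * cosh_sq' x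

lemma two_mul_sinh_mul_cosh_mul_coth_mul_coth_div_sinh (hx : sinh x ≠ 0) :
    2 * sinh x * cosh y * (cosh x / sinh x) * (cosh z / sinh z) / sinh z =
      2 * cosh x * cosh y * cosh z / sinh z ^ 2 := by
  field_simp

lemma exp_add_sub_le (hz : 0 < z) : exp (x + y - z) ≤ 2 * cosh x * cosh y * cosh z / sinh z ^ 2 := by
  have hsz : 0 < sinh z := sinh_pos_iff.2 hz
  have hx : exp x / 2 ≤ cosh x := by rw [cosh_eq]; linarith [exp_pos (-x)]
  have hy : exp y / 2 ≤ cosh y := by rw [cosh_eq]; linarith [exp_pos (-y)]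
  have hz' : sinh z ≤ exp z / 2 := by rw [sinh_eq]; linarith [exp_pos (-z)]
  have : sinh z ≤ cosh z := (sinh_lt_cosh z).le
  calc exp (x + y - z) = 2 * (exp x / 2) * (exp y / 2) / (exp z / 2) := by
        rw [exp_sub, exp_add]; field_simp
    _ ≤ 2 * cosh x * cosh y / sinh z := by gcongr
    _ ≤ 2 * cosh x * cosh y / sinh z * (cosh z / sinh z) :=
        le_mul_of_one_le_right (by positivity) ((one_le_div hsz).2 this)
    _ = 2 * cosh x * cosh y * cosh z / sinh z ^ 2 := by ring

lemma one_add_two_mul_sinh_mul_cosh_mul_coth_mul_coth_div_sinh_le_cosh_sq {w a : ℝ}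
    (hx : sinh x ≠ 0) (hz : sinh z ≠ 0)
    (hw : cosh w = cosh y / (sinh x * sinh z) + cosh x / sinh x * (cosh z / sinh z))
    (ha : cosh a = sinh x * sinh w) :
    1 + 2 * sinh x * cosh y * (cosh x / sinh x) * (cosh z / sinh z) / sinh z ≤ cosh a ^ 2 := by
  rw [ha, mul_pow, sinh_sq w, hw, sinh_sq_mul_sq_sub_one_eq y hx hz]
  have : 0 ≤ (cosh y ^ 2 + cosh x ^ 2) / sinh z ^ 2 := by positivity
  linarith

end Hyperbolic

/-- Case 2 of the telescoping theorem: with `cosh l13` given by the law of cosines and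
`cosh(lα/2) = sinh(l1/2) sinh(l13)`, one has the lower bound
`cosh²(lα/2) ≥ 1 + 2 sinh(l1/2)cosh(l2/2)coth(l1/2)coth(l3/2)/sinh(l3/2)`; consequently
if `lα → 0` and `l1, l2, l3 → ∞` then `l3 - l1 - l2 → ∞`. -/
theorem telescoping_case_two (l1 l2 l3 l13 lα : ℝ → ℝ)
    (hpos : ∀ t, 0 < l1 t ∧ 0 < l2 t ∧ 0 < l3 t)
    (h13 : ∀ t, Real.cosh (l13 t) =
      Real.cosh (l2 t / 2) / (Real.sinh (l1 t / 2) * Real.sinh (l3 t / 2)) +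
        (Real.cosh (l1 t / 2) / Real.sinh (l1 t / 2)) *
          (Real.cosh (l3 t / 2) / Real.sinh (l3 t / 2)))
    (hα : ∀ t, Real.cosh (lα t / 2) = Real.sinh (l1 t / 2) * Real.sinh (l13 t)) :
    (∀ t, Real.cosh (lα t / 2) ^ 2 ≥
      1 + 2 * Real.sinh (l1 t / 2) * Real.cosh (l2 t / 2) *
        (Real.cosh (l1 t / 2) / Real.sinh (l1 t / 2)) *
          (Real.cosh (l3 t / 2) / Real.sinh (l3 t / 2)) / Real.sinh (l3 t / 2)) ∧
    (Tendsto lα atTop (nhds 0) → Tendsto l1 atTop atTop → Tendsto l2 atTop atTop →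
      Tendsto l3 atTop atTop →
      Tendsto (fun t => l3 t - l1 t - l2 t) atTop atTop) := by
  have hl3 t : 0 < l3 t / 2 := half_pos (hpos t).2.2
  have hs1 t : sinh (l1 t / 2) ≠ 0 := (sinh_pos_iff.2 (half_pos (hpos t).1)).ne'
  have hs3 t : sinh (l3 t / 2) ≠ 0 := (sinh_pos_iff.2 (hl3 t)).ne'
  have key t := one_add_two_mul_sinh_mul_cosh_mul_coth_mul_coth_div_sinh_le_cosh_sq _
    (hs1 t) (hs3 t) (h13 t) (hα t)
  refine ⟨key, fun hα0 _ _ _ => ?_⟩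
  have hexp t : exp (-((l3 t - l1 t - l2 t) / 2)) ≤ sinh (lα t / 2) ^ 2 := calc
    exp (-((l3 t - l1 t - l2 t) / 2)) = exp (l1 t / 2 + l2 t / 2 - l3 t / 2) := by ring_nf
    _ ≤ 2 * cosh (l1 t / 2) * cosh (l2 t / 2) * cosh (l3 t / 2) / sinh (l3 t / 2) ^ 2 :=
      exp_add_sub_le _ (hl3 t)
    _ = _ := (two_mul_sinh_mul_cosh_mul_coth_mul_coth_div_sinh _ (hs1 t)).symm
    _ ≤ cosh (lα t / 2) ^ 2 - 1 := by linarith [key t]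
    _ = sinh (lα t / 2) ^ 2 := (sinh_sq _).symm
  have hsinh : Tendsto (fun t => sinh (lα t / 2) ^ 2) atTop (𝓝 0) :=
    ((by fun_prop : Continuous fun x => sinh (x / 2) ^ 2).tendsto' 0 0 (by simp)).comp hα0
  simpa using (tendsto_atTop_of_exp_neg_le hsinh (.of_forall hexp)).atTop_mul_const two_pos
end

section
/- Let $x(t), y(t) \to \infty$ be real functions. Suppose $l_\alpha(t)$ is defined by $\cosh(l_\alpha) = 1 + 2e^{-l_1} + 2e^{-l_2} + 2e^{(l_3 - l_1 - l_2)/2} + E(t)$ where $l_1, l_2, l_3 \to \infty$ and $|E(t)| \le C(e^{-2l_1} + e^{-2l_2} + e^{(-l_1 - 3l_2 + l_3)/2} + e^{(-3l_1 - l_2 + l_3)/2})$ with $l_3 \le l_1 + l_2$. If $l_\alpha(t) \to 0$, then $l_1 + l_2 - l_3 \to \infty$. -/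
/-!
Every correction term in the expansion of `cosh lα` tends to `0`: `e^{-l₁}`, `e^{-l₂}`
directly, and the error bound because, by `l₃ ≤ l₁ + l₂`, each of its exponents is eventually at most
`-l₁` or `-l₂`. Since `cosh lα → 1`, the remaining term `2 e^{(l₃ - l₁ - l₂)/2}` must tend to
`0` as well, i.e. `l₁ + l₂ - l₃ → ∞`.
-/

open Filter Topology Real

section

variable {α : Type*} {l : Filter α}

lemma tendsto_exp_nhds_zero_of_eventuallyLE_neg {f g : α → ℝ} (hf : Tendsto f l atTop)
    (hg : ∀ᶠ t in l, g t ≤ -f t) : Tendsto (fun t => exp (g t)) l (𝓝 0) :=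
  tendsto_exp_comp_nhds_zero.mpr (tendsto_atBot_mono' l hg (tendsto_neg_atTop_atBot.comp hf))

lemma tendsto_exp_neg_nhds_zero {f : α → ℝ} (hf : Tendsto f l atTop) :
    Tendsto (fun t => exp (-f t)) l (𝓝 0) :=
  tendsto_exp_nhds_zero_of_eventuallyLE_neg hf (.of_forall fun _ => le_rfl)

lemma tendsto_nhds_zero_of_abs_le_exp_error {l1 l2 l3 E : α → ℝ} (C : ℝ)
    (h1 : Tendsto l1 l atTop) (h2 : Tendsto l2 l atTop) (hle : ∀ t, l3 t ≤ l1 t + l2 t)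
    (hE : ∀ t, |E t| ≤ C * (exp (-2 * l1 t) + exp (-2 * l2 t) +
      exp ((-l1 t - 3 * l2 t + l3 t) / 2) + exp ((-3 * l1 t - l2 t + l3 t) / 2))) :
    Tendsto E l (𝓝 0) := by
  have hl1 : ∀ᶠ t in l, -2 * l1 t ≤ -l1 t := (h1.eventually_ge_atTop 0).mono fun t ht => by linarith
  have hl2 : ∀ᶠ t in l, -2 * l2 t ≤ -l2 t := (h2.eventually_ge_atTop 0).mono fun t ht => by linarith
  have hl3 : ∀ᶠ t in l, (-l1 t - 3 * l2 t + l3 t) / 2 ≤ -l2 t :=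
    .of_forall fun t => by linarith [hle t]
  have hl4 : ∀ᶠ t in l, (-3 * l1 t - l2 t + l3 t) / 2 ≤ -l1 t :=
    .of_forall fun t => by linarith [hle t]
  have hbound := ((((tendsto_exp_nhds_zero_of_eventuallyLE_neg h1 hl1).add
    (tendsto_exp_nhds_zero_of_eventuallyLE_neg h2 hl2)).add
    (tendsto_exp_nhds_zero_of_eventuallyLE_neg h2 hl3)).add
    (tendsto_exp_nhds_zero_of_eventuallyLE_neg h1 hl4)).const_mul C
  simp only [add_zero, mul_zero] at hbound
  exact squeeze_zero_norm hE hbound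

end

theorem telescoping_case_one_general (l1 l2 l3 lα E : ℝ → ℝ) (C : ℝ)
    (h1 : Tendsto l1 atTop atTop) (h2 : Tendsto l2 atTop atTop)
    (hcosh : ∀ t, Real.cosh (lα t) =
      1 + 2 * Real.exp (-l1 t) + 2 * Real.exp (-l2 t) +
        2 * Real.exp ((l3 t - l1 t - l2 t) / 2) + E t)
    (hE : ∀ t, |E t| ≤ C * (Real.exp (-2 * l1 t) + Real.exp (-2 * l2 t) +
      Real.exp ((-l1 t - 3 * l2 t + l3 t) / 2) + Real.exp ((-3 * l1 t - l2 t + l3 t) / 2)))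
    (hle : ∀ t, l3 t ≤ l1 t + l2 t)
    (hα : Tendsto lα atTop (nhds 0)) :
    Tendsto (fun t => l1 t + l2 t - l3 t) atTop atTop := by
  have hE0 := tendsto_nhds_zero_of_abs_le_exp_error C h1 h2 hle hE
  have hcosh1 : Tendsto (fun t => cosh (lα t)) atTop (𝓝 1) := by
    simpa [Function.comp_def] using (continuous_cosh.tendsto 0).comp hα
  have hlead : Tendsto (fun t => exp ((l3 t - l1 t - l2 t) / 2)) atTop (𝓝 0) := by
    have h := ((((hcosh1.sub_const 1).sub ((tendsto_exp_neg_nhds_zero h1).const_mul 2)).sub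
      ((tendsto_exp_neg_nhds_zero h2).const_mul 2)).sub hE0).div_const 2
    simp only [sub_self, mul_zero, zero_div] at h
    exact h.congr fun t => by rw [hcosh t]; ring
  have hbot := tendsto_exp_comp_nhds_zero.mp hlead
  exact (hbot.const_mul_atBot_of_neg (by norm_num : (-2 : ℝ) < 0)).congr fun t => by ring

/-- Case 1 of the telescoping theorem: if `cosh lα` has the stated expansion with a
bounded error term, `l1, l2, l3 → ∞`, `l3 ≤ l1 + l2`, and `lα → 0`, then
`l1 + l2 - l3 → ∞`. -/
theorem telescoping_case_one (l1 l2 l3 lα E : ℝ → ℝ) (C : ℝ) (hC : 0 < C)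
    (h1 : Tendsto l1 atTop atTop) (h2 : Tendsto l2 atTop atTop)
    (h3 : Tendsto l3 atTop atTop)
    (hcosh : ∀ t, Real.cosh (lα t) =
      1 + 2 * Real.exp (-l1 t) + 2 * Real.exp (-l2 t) +
        2 * Real.exp ((l3 t - l1 t - l2 t) / 2) + E t)
    (hE : ∀ t, |E t| ≤ C * (Real.exp (-2 * l1 t) + Real.exp (-2 * l2 t) +
      Real.exp ((-l1 t - 3 * l2 t + l3 t) / 2) + Real.exp ((-3 * l1 t - l2 t + l3 t) / 2)))
    (hle : ∀ t, l3 t ≤ l1 t + l2 t)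
    (hα : Tendsto lα atTop (nhds 0)) :
    Tendsto (fun t => l1 t + l2 t - l3 t) atTop atTop :=
  telescoping_case_one_general l1 l2 l3 lα E C h1 h2 hcosh hE hle hα
end
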